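/- Let |φ| < 1, let Σ(φ) be the q×q matrix with entries φ^{|i−j|}/(1−φ²), and let ψ ∈ ℝ with |ψ| < 1. Then ‖Σ(φ) − Σ(ψ)‖_∞ ≤ |φ − ψ| · K(φ, ψ) where K(φ, ψ) = |φ+ψ|/((1−φ²)(1−ψ²)) · (1 + 2/(1−|φ|)) + 2(1/(1−φ²) + |φ−ψ||φ+ψ|/((1−φ²)(1−ψ²))) · 1/((1−|φ|)(1−|ψ|)); in particular Σ(ψ) → Σ(φ) in ‖·‖_∞ as ψ → φ, uniformly in q. -/

import Mathlib

/-!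
Write `1/(1-ψ²) = 1/(1-φ²) + (φ²-ψ²)/((1-φ²)(1-ψ²))`. At lag `d = |i-j|` the entry of
`Σ(φ) - Σ(ψ)` is then at most `c |φ|^d + (1/(1-φ²) + c) |φ^d - ψ^d|` in absolute value, with
`c = |φ-ψ||φ+ψ|/((1-φ²)(1-ψ²))`. Each lag occurs at most twice in a row, so the row sum is at
most twice the sum of this bound over all lags, and both `∑ |φ|^d` and `∑ |φ^d - ψ^d|` are
bounded independently of `q`.
-/

open Matrix

/-- The AR(1) covariance matrix `Σ(φ)_{i,j} = φ^{|i−j|}/(1−φ²)`. -/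
noncomputable def arCov (q : ℕ) (φ : ℝ) : Matrix (Fin q) (Fin q) ℝ :=
  Matrix.of fun i j => φ ^ (Nat.dist i.val j.val) / (1 - φ ^ 2)

open Finset

theorem sum_natDist_le_two_mul_sum_range {q : ℕ} (i : Fin q) {g : ℕ → ℝ} (hg : ∀ d, 0 ≤ g d) :
    ∑ j : Fin q, g (Nat.dist i.val j.val) ≤ 2 * ∑ d ∈ range q, g d := by
  -- `j` is determined by its distance to `i` and the side of `i` it lies on.
  let e : Fin q → Bool × ℕ := fun j => (decide (j ≤ i), Nat.dist i.val j.val)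
  have he : Function.Injective e := by
    intro j k hjk
    simp only [e, Prod.mk.injEq, decide_eq_decide, Fin.le_def] at hjk
    unfold Nat.dist at hjk
    omega
  have himage : univ.image e ⊆ univ ×ˢ range q := by
    intro p hp
    obtain ⟨j, -, rfl⟩ := mem_image.1 hp
    simp only [e, mem_product, mem_univ, mem_range, true_and, Nat.dist]
    omega
  calc ∑ j : Fin q, g (Nat.dist i.val j.val) = ∑ p ∈ univ.image e, g p.2 :=
        (sum_image (f := fun p : Bool × ℕ => g p.2) fun j _ k _ h => he h).symm
    _ ≤ ∑ p ∈ univ ×ˢ range q, g p.2 :=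
        sum_le_sum_of_subset_of_nonneg himage fun p _ _ => hg p.2
    _ = 2 * ∑ d ∈ range q, g d := by simp [sum_product]

theorem geom_sum_le_one_div_of_lt_one {x : ℝ} (hx₀ : 0 ≤ x) (hx₁ : x < 1) (n : ℕ) :
    ∑ d ∈ range n, x ^ d ≤ 1 / (1 - x) := by
  have h := geom_sum_Ico_le_of_lt_one (m := 0) (n := n) hx₀ hx₁
  rw [← range_eq_Ico] at h
  simpa using h

/-- Summing `x^(d+1) - y^(d+1) = x (x^d - y^d) + (x - y) y^d` over `d < n` bounds
`S (n+1) = ∑_{d ≤ n} |x^d - y^d|` by `|x| S (n+1)` plus a geometric series in `|y|`. -/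
theorem sum_range_abs_pow_sub_pow_le {x y : ℝ} (hx : |x| < 1) (hy : |y| < 1) (n : ℕ) :
    ∑ d ∈ range n, |x ^ d - y ^ d| ≤ |x - y| / ((1 - |x|) * (1 - |y|)) := by
  let S : ℕ → ℝ := fun m => ∑ d ∈ range m, |x ^ d - y ^ d|
  have hstep : ∀ d, |x ^ (d + 1) - y ^ (d + 1)| ≤ |x| * |x ^ d - y ^ d| + |x - y| * |y| ^ d := by
    intro d
    calc |x ^ (d + 1) - y ^ (d + 1)| = |x * (x ^ d - y ^ d) + (x - y) * y ^ d| := by ring_nf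
      _ ≤ |x| * |x ^ d - y ^ d| + |x - y| * |y| ^ d := by
        simpa only [abs_mul, abs_pow] using abs_add_le (x * (x ^ d - y ^ d)) ((x - y) * y ^ d)
  have hmono : S n ≤ S (n + 1) := by
    simp only [S, sum_range_succ]
    linarith [abs_nonneg (x ^ n - y ^ n)]
  have hrec : S (n + 1) ≤ |x| * S (n + 1) + |x - y| / (1 - |y|) := by
    calc S (n + 1) = ∑ d ∈ range n, |x ^ (d + 1) - y ^ (d + 1)| := by simp [S, sum_range_succ']
      _ ≤ ∑ d ∈ range n, (|x| * |x ^ d - y ^ d| + |x - y| * |y| ^ d) :=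
          sum_le_sum fun d _ => hstep d
      _ = |x| * S n + |x - y| * ∑ d ∈ range n, |y| ^ d := by
        rw [sum_add_distrib, mul_sum, mul_sum]
      _ ≤ |x| * S (n + 1) + |x - y| * (1 / (1 - |y|)) := by
        gcongr
        exact geom_sum_le_one_div_of_lt_one (abs_nonneg y) hy n
      _ = |x| * S (n + 1) + |x - y| / (1 - |y|) := by rw [mul_one_div]
  have hx' : 0 < 1 - |x| := by linarith
  have hy' : 0 < 1 - |y| := by linarith
  rw [mul_comm, ← div_div, le_div_iff₀ hx']
  calc S n * (1 - |x|) ≤ S (n + 1) * (1 - |x|) := by gcongr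
    _ ≤ |x - y| / (1 - |y|) := by linarith

/-- From `u/s - v/t = (t - s)/(st) · u + (u - v)/t` and `1/t = 1/s + (s - t)/(st)`. -/
theorem abs_div_sub_div_le (u v : ℝ) {s t : ℝ} (hs : 0 < s) (ht : 0 < t) :
    |u / s - v / t| ≤ |t - s| / (s * t) * |u| + (1 / s + |t - s| / (s * t)) * |u - v| := by
  have hsplit : u / s - v / t = (t - s) / (s * t) * u + 1 / t * (u - v) := by
    field_simp
    ring
  have hinv : 1 / t ≤ 1 / s + |t - s| / (s * t) := by
    have : 1 / t = 1 / s + (s - t) / (s * t) := by field_simp; ring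
    rw [this, abs_sub_comm t s]
    gcongr
    exact le_abs_self _
  rw [hsplit]
  calc |(t - s) / (s * t) * u + 1 / t * (u - v)|
      ≤ |t - s| / (s * t) * |u| + 1 / t * |u - v| := by
        refine (abs_add_le _ _).trans_eq ?_
        rw [abs_mul, abs_mul, abs_div, abs_of_pos (mul_pos hs ht), abs_of_pos (one_div_pos.2 ht)]
    _ ≤ _ := by gcongr

/-- Lipschitz-type bound, uniform in `q`, for the AR(1) covariance matrix in the
max absolute row sum norm. -/
theorem arCov_diff_linfty_bound {q : ℕ} (φ ψ : ℝ) (hφ : |φ| < 1) (hψ : |ψ| < 1) :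
    ∀ i, ∑ j, |arCov q φ i j - arCov q ψ i j| ≤
      |φ - ψ| *
        (|φ + ψ| / ((1 - φ ^ 2) * (1 - ψ ^ 2)) * (1 + 2 / (1 - |φ|)) +
          2 * (1 / (1 - φ ^ 2) +
            |φ - ψ| * |φ + ψ| / ((1 - φ ^ 2) * (1 - ψ ^ 2))) *
            (1 / ((1 - |φ|) * (1 - |ψ|)))) := by
  intro i
  have hφ₂ : 0 < 1 - φ ^ 2 := by nlinarith [sq_abs φ, abs_nonneg φ]
  have hψ₂ : 0 < 1 - ψ ^ 2 := by nlinarith [sq_abs ψ, abs_nonneg ψ]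
  set c := |φ - ψ| * |φ + ψ| / ((1 - φ ^ 2) * (1 - ψ ^ 2)) with hc
  have hc₀ : 0 ≤ c := by positivity
  have hC₀ : 0 ≤ 1 / (1 - φ ^ 2) + c := by positivity
  have hgap : |(1 - ψ ^ 2) - (1 - φ ^ 2)| = |φ - ψ| * |φ + ψ| := by
    rw [← abs_mul]; ring_nf
  have hentry : ∀ d : ℕ, |φ ^ d / (1 - φ ^ 2) - ψ ^ d / (1 - ψ ^ 2)| ≤
      c * |φ| ^ d + (1 / (1 - φ ^ 2) + c) * |φ ^ d - ψ ^ d| := fun d => by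
    simpa only [hgap, abs_pow] using abs_div_sub_div_le (φ ^ d) (ψ ^ d) hφ₂ hψ₂
  have hrow := sum_natDist_le_two_mul_sum_range i
    (g := fun d => c * |φ| ^ d + (1 / (1 - φ ^ 2) + c) * |φ ^ d - ψ ^ d|) fun d => by positivity
  calc ∑ j, |arCov q φ i j - arCov q ψ i j|
      ≤ 2 * ∑ d ∈ range q, (c * |φ| ^ d + (1 / (1 - φ ^ 2) + c) * |φ ^ d - ψ ^ d|) :=
        (sum_le_sum fun j _ => hentry _).trans hrow
    _ = 2 * (c * ∑ d ∈ range q, |φ| ^ d +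
          (1 / (1 - φ ^ 2) + c) * ∑ d ∈ range q, |φ ^ d - ψ ^ d|) := by
        rw [sum_add_distrib, mul_sum, mul_sum]
    _ ≤ 2 * (c * (1 / (1 - |φ|)) +
          (1 / (1 - φ ^ 2) + c) * (|φ - ψ| / ((1 - |φ|) * (1 - |ψ|)))) := by
        gcongr
        · exact geom_sum_le_one_div_of_lt_one (abs_nonneg φ) hφ q
        · exact sum_range_abs_pow_sub_pow_le hφ hψ q
    _ ≤ _ := by
        have htarget : |φ - ψ| * (|φ + ψ| / ((1 - φ ^ 2) * (1 - ψ ^ 2)) * (1 + 2 / (1 - |φ|)) +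
            2 * (1 / (1 - φ ^ 2) + c) * (1 / ((1 - |φ|) * (1 - |ψ|)))) =
            2 * (c * (1 / (1 - |φ|)) +
              (1 / (1 - φ ^ 2) + c) * (|φ - ψ| / ((1 - |φ|) * (1 - |ψ|)))) + c := by
          rw [hc]; ring
        linarith
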